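/- Safe screening rule: let θ* be the lasso dual solution and suppose θ* ∈ R for some set R ⊆ ℝ^d. If max_{θ ∈ R} aᵢᵀθ < 1 and max_{θ ∈ R} (−aᵢ)ᵀθ < 1, then every lasso solution w* has wᵢ* = 0. -/

import Mathlib

/-!
Let `r = y - ∑ⱼ wⱼ aⱼ` be the residual of a lasso solution `w`. Comparing the objective with its
values at coordinatewise perturbations of `w` gives the KKT conditions `|⟪aⱼ, r⟫| ≤ λ` and
`wⱼ ⟪aⱼ, r⟫ = λ |wⱼ|`. They say that `r / λ` is dual feasible and satisfies the variational
inequality of the projection of `y / λ` onto the dual feasible set, so `θ* = r / λ` by uniqueness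
of the projection. The screening hypothesis gives `|⟪aᵢ, θ*⟫| < 1`, i.e. `|⟪aᵢ, r⟫| < λ`, and then
`wᵢ ⟪aᵢ, r⟫ = λ |wᵢ|` forces `wᵢ = 0`.
-/

open RealInnerProductSpace Filter Topology

lemma Finset.sum_apply_update_sub {ι α M : Type*} [Fintype ι] [DecidableEq ι] [AddCommGroup M]
    (g : ι → α → M) (f : ι → α) (j : ι) (v : α) :
    ∑ k, g k (Function.update f j v k) - ∑ k, g k (f k) = g j v - g j (f j) := by
  simp_rw [Function.apply_update (fun k => g k) f j v]
  rw [Finset.sum_update_of_mem (Finset.mem_univ j),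
    Finset.sum_eq_add_sum_sdiff_singleton_of_mem (Finset.mem_univ j)]
  abel

lemma nonpos_of_forall_mul_le_sq_mul {x K : ℝ}
    (h : ∀ s : ℝ, 0 < s → s ≤ 1 → s * x ≤ s ^ 2 * K) : x ≤ 0 := by
  have hlim : Tendsto (fun s : ℝ => s * K) (𝓝[>] 0) (𝓝 0) := by
    simpa using (tendsto_id.mul_const K).mono_left (nhdsWithin_le_nhds (a := (0:ℝ)))
  refine ge_of_tendsto hlim ?_
  filter_upwards [Ioc_mem_nhdsGT one_pos] with s ⟨hs0, hs1⟩
  have := h s hs0 hs1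
  rw [sq, mul_assoc] at this
  exact le_of_mul_le_mul_left this hs0

/-- The hypothesis says that `0` minimizes `t ↦ t²A/2 + λ|w + t| - tc`; the conclusion is
`c ∈ λ ∂|·|(w)`. -/
lemma abs_le_and_mul_eq_of_forall_le {c w A lam : ℝ} (hlam : 0 ≤ lam)
    (h : ∀ t, t * c ≤ t ^ 2 / 2 * A + lam * (|w + t| - |w|)) :
    |c| ≤ lam ∧ w * c = lam * |w| := by
  have hc : |c| ≤ lam := by
    refine abs_le.2 ⟨?_, ?_⟩
    · suffices -c - lam ≤ 0 by linarith
      refine nonpos_of_forall_mul_le_sq_mul (K := A / 2) fun s hs _ => ?_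
      have := h (-s)
      have : |w + -s| - |w| ≤ s := by
        simpa [abs_of_pos hs] using abs_sub_abs_le_abs_sub (w + -s) w
      nlinarith
    · suffices c - lam ≤ 0 by linarith
      refine nonpos_of_forall_mul_le_sq_mul (K := A / 2) fun s hs _ => ?_
      have := h s
      have : |w + s| - |w| ≤ s := by
        simpa [abs_of_pos hs] using abs_sub_abs_le_abs_sub (w + s) w
      nlinarith
  refine ⟨hc, le_antisymm ?_ ?_⟩
  · calc w * c ≤ |w| * |c| := by rw [← abs_mul]; exact le_abs_self _
      _ ≤ lam * |w| := by rw [mul_comm]; exact mul_le_mul_of_nonneg_right hc (abs_nonneg w)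
  · suffices lam * |w| - w * c ≤ 0 by linarith
    refine nonpos_of_forall_mul_le_sq_mul (K := w ^ 2 * A / 2) fun s hs hs1 => ?_
    have := h (-(s * w))
    have : |w + -(s * w)| = (1 - s) * |w| := by
      rw [show w + -(s * w) = (1 - s) * w by ring, abs_mul, abs_of_nonneg (by linarith)]
    nlinarith

lemma eq_of_norm_sub_le_of_inner_nonneg {E : Type*} [NormedAddCommGroup E] [InnerProductSpace ℝ E]
    {b u v : E} (hv : 0 ≤ ⟪v - b, u - v⟫) (hle : ‖u - b‖ ≤ ‖v - b‖) : u = v := by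
  have hexp : ‖u - b‖ ^ 2 = ‖v - b‖ ^ 2 + 2 * ⟪v - b, u - v⟫ + ‖u - v‖ ^ 2 := by
    rw [show u - b = (v - b) + (u - v) by abel, norm_add_sq_real]
  have : ‖u - v‖ ^ 2 ≤ 0 := by nlinarith [norm_nonneg (u - b), norm_nonneg (v - b)]
  exact sub_eq_zero.1 <| norm_eq_zero.1 <| (pow_eq_zero_iff two_ne_zero).1 <|
    le_antisymm this (sq_nonneg _)

section Lasso

variable {ι E : Type*} [Fintype ι] [NormedAddCommGroup E] [InnerProductSpace ℝ E]
  (a : ι → E) (y : E) (lam : ℝ)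

def lassoResidual (w : ι → ℝ) : E := y - ∑ j, w j • a j

noncomputable def lassoObjective (w : ι → ℝ) : ℝ :=
  1 / 2 * ‖lassoResidual a y w‖ ^ 2 + lam * ∑ j, |w j|

variable {a y lam}

lemma lassoObjective_update [DecidableEq ι] (w : ι → ℝ) (j : ι) (t : ℝ) :
    lassoObjective a y lam (Function.update w j (w j + t)) =
      lassoObjective a y lam w - t * ⟪a j, lassoResidual a y w⟫ + t ^ 2 / 2 * ‖a j‖ ^ 2
        + lam * (|w j + t| - |w j|) := by
  have hres :
      lassoResidual a y (Function.update w j (w j + t)) = lassoResidual a y w - t • a j := by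
    have := Finset.sum_apply_update_sub (fun k x => x • a k) w j (w j + t)
    rw [add_smul, add_sub_cancel_left] at this
    simp only [lassoResidual, ← this]
    abel
  have habs := Finset.sum_apply_update_sub (fun _ x => |x|) w j (w j + t)
  simp only [lassoObjective, hres, norm_sub_sq_real, real_inner_smul_right, norm_smul,
    real_inner_comm, Real.norm_eq_abs, mul_pow, sq_abs]
  linear_combination lam * habs

variable {ws : ι → ℝ} (hopt : ∀ w, lassoObjective a y lam ws ≤ lassoObjective a y lam w)
include hopt

lemma abs_inner_lassoResidual_le_and_mul_eq (hlam : 0 ≤ lam) (j : ι) :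
    |⟪a j, lassoResidual a y ws⟫| ≤ lam ∧ ws j * ⟪a j, lassoResidual a y ws⟫ = lam * |ws j| := by
  classical
  refine abs_le_and_mul_eq_of_forall_le (A := ‖a j‖ ^ 2) hlam fun t => ?_
  have := hopt (Function.update ws j (ws j + t))
  rw [lassoObjective_update] at this
  linarith

lemma lasso_coeff_eq_zero_of_abs_inner_lt (hlam : 0 ≤ lam) {j : ι}
    (hlt : |⟪a j, lassoResidual a y ws⟫| < lam) : ws j = 0 := by
  have hkkt := (abs_inner_lassoResidual_le_and_mul_eq hopt hlam j).2
  have : |ws j| * (lam - |⟪a j, lassoResidual a y ws⟫|) = 0 := by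
    rw [mul_sub, ← abs_mul, hkkt, abs_mul, abs_of_nonneg hlam, abs_abs]
    ring
  simpa [(sub_pos.2 hlt).ne'] using this

/-- The variational inequality characterizing `r / λ` as the projection of `y / λ` onto the dual
feasible set. -/
lemma inner_smul_lassoResidual_nonneg (hlam : 0 < lam) {θ : E} (hθ : ∀ j, |⟪a j, θ⟫| ≤ 1) :
    0 ≤ ⟪lam⁻¹ • lassoResidual a y ws - lam⁻¹ • y, θ - lam⁻¹ • lassoResidual a y ws⟫ := by
  set r := lassoResidual a y ws
  have hdiff : lam⁻¹ • r - lam⁻¹ • y = -(lam⁻¹ • ∑ j, ws j • a j) := by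
    simp only [r, lassoResidual, smul_sub]
    abel
  have hdual (j : ι) : ws j * ⟪a j, lam⁻¹ • r⟫ = |ws j| := by
    rw [real_inner_smul_right, mul_left_comm,
      (abs_inner_lassoResidual_le_and_mul_eq hopt hlam.le j).2, inv_mul_cancel_left₀ hlam.ne']
  have hterm (j : ι) : ws j * ⟪a j, θ⟫ ≤ |ws j| :=
    calc ws j * ⟪a j, θ⟫ ≤ |ws j| * |⟪a j, θ⟫| := by rw [← abs_mul]; exact le_abs_self _
      _ ≤ |ws j| := mul_le_of_le_one_right (abs_nonneg _) (hθ j)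
  calc ⟪lam⁻¹ • r - lam⁻¹ • y, θ - lam⁻¹ • r⟫
      = lam⁻¹ * ∑ j, (|ws j| - ws j * ⟪a j, θ⟫) := by
        simp only [hdiff, inner_neg_left, real_inner_smul_left, sum_inner, inner_sub_right,
          mul_sub, hdual, Finset.sum_sub_distrib]
        ring
    _ ≥ 0 := mul_nonneg (inv_nonneg.2 hlam.le) (Finset.sum_nonneg fun j _ => sub_nonneg.2 (hterm j))

lemma abs_inner_inv_smul_lassoResidual_le_one (hlam : 0 < lam) (j : ι) :
    |⟪a j, lam⁻¹ • lassoResidual a y ws⟫| ≤ 1 := by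
  rw [real_inner_smul_right, abs_mul, abs_inv, abs_of_pos hlam, inv_mul_le_one₀ hlam]
  exact (abs_inner_lassoResidual_le_and_mul_eq hopt hlam.le j).1

lemma eq_inv_smul_lassoResidual_of_forall_norm_sub_le (hlam : 0 < lam) {θs : E}
    (hθs : ∀ j, |⟪a j, θs⟫| ≤ 1)
    (hproj : ∀ θ, (∀ j, |⟪a j, θ⟫| ≤ 1) → ‖θs - lam⁻¹ • y‖ ≤ ‖θ - lam⁻¹ • y‖) :
    θs = lam⁻¹ • lassoResidual a y ws :=
  eq_of_norm_sub_le_of_inner_nonneg (inner_smul_lassoResidual_nonneg hopt hlam hθs)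
    (hproj _ (abs_inner_inv_smul_lassoResidual_le_one hopt hlam))

end Lasso

theorem stmt_18 (d p : ℕ) (a : Fin p → EuclideanSpace ℝ (Fin d))
    (y : EuclideanSpace ℝ (Fin d)) (lam : ℝ) (hlam : 0 < lam)
    (F : Set (EuclideanSpace ℝ (Fin d)))
    (hF : F = {θ | ∀ i, |⟪a i, θ⟫| ≤ 1})
    (θs : EuclideanSpace ℝ (Fin d)) (hθsF : θs ∈ F)
    (hproj : ∀ θ ∈ F, ‖θs - lam⁻¹ • y‖ ≤ ‖θ - lam⁻¹ • y‖)
    (Rset : Set (EuclideanSpace ℝ (Fin d))) (hθsR : θs ∈ Rset)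
    (i : Fin p)
    (hpos : ∀ θ ∈ Rset, ⟪a i, θ⟫ < 1)
    (hneg : ∀ θ ∈ Rset, ⟪-a i, θ⟫ < 1) :
    ∀ ws : Fin p → ℝ,
      (∀ w : Fin p → ℝ,
        (1 / 2) * ‖y - ∑ j, ws j • a j‖ ^ 2 + lam * ∑ j, |ws j| ≤
        (1 / 2) * ‖y - ∑ j, w j • a j‖ ^ 2 + lam * ∑ j, |w j|) →
      ws i = 0 := by
  subst hF
  intro ws hopt
  have hdual : θs = lam⁻¹ • lassoResidual a y ws :=
    eq_inv_smul_lassoResidual_of_forall_norm_sub_le hopt hlam hθsF hproj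
  have hscreen : |⟪a i, θs⟫| < 1 :=
    abs_lt.2 ⟨by linarith [inner_neg_left (𝕜 := ℝ) (a i) θs, hneg θs hθsR], hpos θs hθsR⟩
  refine lasso_coeff_eq_zero_of_abs_inner_lt hopt hlam.le ?_
  rwa [hdual, real_inner_smul_right, abs_mul, abs_inv, abs_of_pos hlam, inv_mul_lt_one₀ hlam]
    at hscreen
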